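/- Let R = ℤ[Δ] with Δ a finitely generated free abelian group of rank n ≥ 1, let m ≥ 1, and let PE ⊆ R^m be a subring defined by finitely many congruences f_i ≡ f_j mod (1 − e^{χ_{ij}}) with each χ_{ij} ≠ 0. Then PE and R^m have the same total ring of fractions; more precisely, for every element x ∈ R^m there exists a non-zero-divisor s ∈ PE (in fact s in the diagonal copy of R) with s·x ∈ PE. -/

import Mathlib

/-!
The product `s` of all the moduli `1 - e^χ` lies in every congruence ideal, so the constant
vector `s` and every `s * x` satisfy all the congruences. Since `Δ` is free abelian it embeds
into some `ι →₀ ℤ` and so has unique sums; hence `ℤ[Δ]` is a domain, and `s`, a product of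
nonzero factors, is a non-zero-divisor.
-/

theorem Module.Free.uniqueSums (R M : Type*) [Semiring R] [UniqueSums R] [AddCommMonoid M]
    [Module R M] [Module.Free R M] : UniqueSums M :=
  (Module.Free.chooseBasis R M).repr.toAddEquiv.uniqueSums_iff.mpr inferInstance

theorem AddMonoidAlgebra.one_sub_single_one_ne_zero {R A : Type*} [Ring R] [Nontrivial R]
    [AddZeroClass A] {a : A} (ha : a ≠ 0) : (1 - single a 1 : AddMonoidAlgebra R A) ≠ 0 := by
  rw [one_def, sub_ne_zero, Ne, single_left_inj one_ne_zero]
  exact ha.symm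

theorem stmt6_general (Δ : Type*) [AddCommGroup Δ] [Module.Free ℤ Δ]
    (m : ℕ)
    (E : Finset (Fin m × Fin m × Δ)) (hE : ∀ t ∈ E, t.2.2 ≠ 0) :
    let R := AddMonoidAlgebra ℤ Δ
    let PE : Set (Fin m → R) := {f | ∀ t ∈ E,
      f t.1 - f t.2.1 ∈ Ideal.span {1 - AddMonoidAlgebra.single t.2.2 (1 : ℤ)}}
    ∀ x : Fin m → R, ∃ s : R,
      s ∈ nonZeroDivisors R ∧
      (fun _ => s : Fin m → R) ∈ PE ∧
      (fun i => s * x i) ∈ PE := by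
  intro R PE x
  have := Module.Free.uniqueSums ℤ Δ
  let s : R := ∏ t ∈ E, (1 - AddMonoidAlgebra.single t.2.2 1)
  have hs : ∀ t ∈ E, s ∈ Ideal.span {1 - AddMonoidAlgebra.single t.2.2 (1 : ℤ)} :=
    fun t ht => Ideal.mem_span_singleton.mpr (Finset.dvd_prod_of_mem _ ht)
  have hs_ne : s ≠ 0 := Finset.prod_ne_zero_iff.mpr fun t ht =>
    AddMonoidAlgebra.one_sub_single_one_ne_zero (hE t ht)
  refine ⟨s, mem_nonZeroDivisors_of_ne_zero hs_ne, fun t _ => ?_, fun t ht => ?_⟩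
  · simp only [sub_self, Submodule.zero_mem]
  · rw [← mul_sub]
    exact Ideal.mul_mem_right _ _ (hs t ht)

/-- Localization phenomenon: for `PE ⊆ R^m` (with `R = ℤ[Δ]`) defined by
congruences `f_i ≡ f_j mod (1 - e^χ)` with all `χ ≠ 0`, every `x ∈ R^m` can be
moved into `PE` by multiplying by a diagonal non-zero-divisor `s` lying in
`PE`; hence `PE` and `R^m` have the same total ring of fractions. -/
theorem stmt6 (Δ : Type*) [AddCommGroup Δ] [Module.Free ℤ Δ] [Module.Finite ℤ Δ]
    (n : ℕ) (hn : 1 ≤ n) (hrank : Module.finrank ℤ Δ = n)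
    (m : ℕ) (hm : 1 ≤ m)
    (E : Finset (Fin m × Fin m × Δ)) (hE : ∀ t ∈ E, t.2.2 ≠ 0) :
    let R := AddMonoidAlgebra ℤ Δ
    let PE : Set (Fin m → R) := {f | ∀ t ∈ E,
      f t.1 - f t.2.1 ∈ Ideal.span {1 - AddMonoidAlgebra.single t.2.2 (1 : ℤ)}}
    ∀ x : Fin m → R, ∃ s : R,
      s ∈ nonZeroDivisors R ∧
      (fun _ => s : Fin m → R) ∈ PE ∧
      (fun i => s * x i) ∈ PE :=
  stmt6_general Δ m E hE
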